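/- Effective conductance is invariant under star network reduction: for a finite connected weighted graph $(V,c)$ with $|V|\geq 3$, vertices $x\neq y$, and any third vertex $v\notin\{x,y\}$ with $\sum_{w\neq v}c_{vw}>0$, the effective conductance between $x$ and $y$ in $(V,c)$ equals the effective conductance between $x$ and $y$ in the reduced graph $(V\setminus\{v\},\tilde{c})$, where $\tilde{c}_{yz}=c_{yz}+c_{yv}c_{vz}/\sum_{w\neq v}c_{vw}$. -/

import Mathlib

open Finset

noncomputable section

def elEnergy {V : Type*} [Fintype V] (c : V → V → ℝ) (h : V → ℝ) : ℝ :=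
  (1 / 2) * ∑ z, ∑ w, c z w * (h z - h w) ^ 2

/-- Effective conductance between `x` and `y` on the weighted graph `(V, c)`. -/
def ceff {V : Type*} [Fintype V] (c : V → V → ℝ) (x y : V) : ℝ :=
  sInf {E : ℝ | ∃ h : V → ℝ, h x = 1 ∧ h y = 0 ∧ elEnergy c h = E}

/-!
Eliminating `v` from the energy of `h` is completing a square in the value `h v`. With weights
`a w = c v w` of total mass `A`, the energy of the star at `v` splits as
`∑ a w (t - h w)² = (1 / 2A) ∑∑ a z a w (h z - h w)² + (A t - ∑ a w h w)² / A`: the first term is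
the energy of the mesh added by the reduction and the second vanishes exactly at the harmonic
value `t = (∑ a w h w) / A`. So restricting a potential never raises the energy, and every
potential on the reduced graph is the restriction of one with the same energy.
-/

section Algebra

variable {ι : Type*} (s : Finset ι) (a h : ι → ℝ)

lemma sum_mul_sub_sq (t : ℝ) :
    ∑ w ∈ s, a w * (t - h w) ^ 2 =
      (∑ w ∈ s, a w) * t ^ 2 - 2 * t * ∑ w ∈ s, a w * h w + ∑ w ∈ s, a w * h w ^ 2 := by
  rw [sum_mul, mul_sum, ← sum_sub_distrib, ← sum_add_distrib]
  exact sum_congr rfl fun w _ => by ring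

lemma sum_sum_mul_mul_sub_sq :
    ∑ z ∈ s, ∑ w ∈ s, a z * a w * (h z - h w) ^ 2 =
      2 * (∑ w ∈ s, a w) * ∑ w ∈ s, a w * h w ^ 2 - 2 * (∑ w ∈ s, a w * h w) ^ 2 := by
  have row : ∀ z ∈ s, ∑ w ∈ s, a z * a w * (h z - h w) ^ 2 =
      a z * h z ^ 2 * ∑ w ∈ s, a w - a z * h z * (2 * ∑ w ∈ s, a w * h w)
        + a z * ∑ w ∈ s, a w * h w ^ 2 := by
    intro z _
    simp only [mul_sum, ← sum_sub_distrib, ← sum_add_distrib]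
    exact sum_congr rfl fun w _ => by ring
  rw [sum_congr rfl row, sum_add_distrib, sum_sub_distrib, ← sum_mul, ← sum_mul, ← sum_mul]
  ring

lemma sum_star_eq_sum_mesh_add_sq (hA : ∑ w ∈ s, a w ≠ 0) (t : ℝ) :
    ∑ w ∈ s, a w * (t - h w) ^ 2 =
      1 / (2 * ∑ w ∈ s, a w) * ∑ z ∈ s, ∑ w ∈ s, a z * a w * (h z - h w) ^ 2
        + ((∑ w ∈ s, a w) * t - ∑ w ∈ s, a w * h w) ^ 2 / ∑ w ∈ s, a w := by
  rw [sum_mul_sub_sq, sum_sum_mul_mul_sub_sq]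
  field_simp
  ring

end Algebra

section StarReduction

variable {V : Type*} [Fintype V] [DecidableEq V] (c : V → V → ℝ) (v : V)

def starReduction (a b : {w : V // w ≠ v}) : ℝ :=
  c a b + c a v * c v b / ∑ w ∈ univ.erase v, c v w

lemma mem_erase_univ_iff (z : V) : z ∈ univ.erase v ↔ z ≠ v := by simp

lemma elEnergy_subtype (d : V → V → ℝ) (h : V → ℝ) :
    elEnergy (fun a b : {w : V // w ≠ v} => d a b) (fun b => h b) =
      1 / 2 * ∑ z ∈ univ.erase v, ∑ w ∈ univ.erase v, d z w * (h z - h w) ^ 2 := by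
  unfold elEnergy
  rw [sum_subtype _ (mem_erase_univ_iff v)]
  exact congrArg _ <| sum_congr rfl fun z _ =>
    (sum_subtype _ (mem_erase_univ_iff v) fun w => d z w * (h z - h w) ^ 2).symm

lemma elEnergy_eq_add_star (hsymm : ∀ z w, c z w = c w z) (h : V → ℝ) :
    elEnergy c h =
      1 / 2 * ∑ z ∈ univ.erase v, ∑ w ∈ univ.erase v, c z w * (h z - h w) ^ 2
        + ∑ w ∈ univ.erase v, c v w * (h v - h w) ^ 2 := by
  have row : ∀ z ∈ univ.erase v, ∑ w, c z w * (h z - h w) ^ 2 =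
      c v z * (h v - h z) ^ 2 + ∑ w ∈ univ.erase v, c z w * (h z - h w) ^ 2 := fun z _ => by
    rw [← add_sum_erase _ _ (mem_univ v), hsymm z v]
    ring
  unfold elEnergy
  rw [← add_sum_erase _ _ (mem_univ v), ← add_sum_erase _ _ (mem_univ v), sum_congr rfl row,
    sum_add_distrib, sub_self]
  ring

lemma elEnergy_eq_starReduction_add_sq (hsymm : ∀ z w, c z w = c w z)
    (hA : ∑ w ∈ univ.erase v, c v w ≠ 0) (h : V → ℝ) :
    elEnergy c h = elEnergy (starReduction c v) (fun b => h b)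
      + ((∑ w ∈ univ.erase v, c v w) * h v - ∑ w ∈ univ.erase v, c v w * h w) ^ 2
        / ∑ w ∈ univ.erase v, c v w := by
  have mesh : ∑ z ∈ univ.erase v, ∑ w ∈ univ.erase v,
      (c z w + c z v * c v w / ∑ w ∈ univ.erase v, c v w) * (h z - h w) ^ 2 =
        ∑ z ∈ univ.erase v, ∑ w ∈ univ.erase v, c z w * (h z - h w) ^ 2
          + (∑ w ∈ univ.erase v, c v w)⁻¹ *
            ∑ z ∈ univ.erase v, ∑ w ∈ univ.erase v, c v z * c v w * (h z - h w) ^ 2 := by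
    simp only [mul_sum, ← sum_add_distrib]
    refine sum_congr rfl fun z _ => sum_congr rfl fun w _ => ?_
    rw [hsymm z v]
    ring
  unfold starReduction
  rw [elEnergy_eq_add_star c v hsymm, sum_star_eq_sum_mesh_add_sq _ _ _ hA,
    elEnergy_subtype v fun z w => c z w + c z v * c v w / ∑ w ∈ univ.erase v, c v w, mesh]
  ring

lemma exists_elEnergy_eq_starReduction (hsymm : ∀ z w, c z w = c w z)
    (hA : ∑ w ∈ univ.erase v, c v w ≠ 0) (h : {w : V // w ≠ v} → ℝ) :
    ∃ H : V → ℝ, (fun b : {w : V // w ≠ v} => H b) = h ∧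
      elEnergy c H = elEnergy (starReduction c v) h := by
  let H₀ : V → ℝ := fun z => if hz : z = v then 0 else h ⟨z, hz⟩
  let H := Function.update H₀ v ((∑ w ∈ univ.erase v, c v w * H₀ w) / ∑ w ∈ univ.erase v, c v w)
  have at_v : H v = (∑ w ∈ univ.erase v, c v w * H₀ w) / ∑ w ∈ univ.erase v, c v w :=
    Function.update_self ..
  have off_v : ∀ w ≠ v, H w = H₀ w := fun w hw => Function.update_of_ne hw ..
  have restrict : (fun b : {w : V // w ≠ v} => H b) = h := by
    funext b
    simp [off_v b b.2, H₀, b.2]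
  have harmonic : ∑ w ∈ univ.erase v, c v w * H w = ∑ w ∈ univ.erase v, c v w * H₀ w :=
    sum_congr rfl fun w hw => by rw [off_v w ((mem_erase_univ_iff v w).1 hw)]
  refine ⟨H, restrict, ?_⟩
  rw [elEnergy_eq_starReduction_add_sq c v hsymm hA, restrict, harmonic, at_v,
    mul_div_cancel₀ _ hA, sub_self]
  simp

end StarReduction

theorem ceff_invariant_star_reduction_general {V : Type*} [Fintype V] [DecidableEq V]
    (c : V → V → ℝ) (hsymm : ∀ z w, c z w = c w z)
    (x y v : V) (hxv : x ≠ v) (hyv : y ≠ v)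
    (hv : 0 < ∑ w ∈ univ.erase v, c v w) :
    ceff c x y =
      ceff (fun a b : {w : V // w ≠ v} =>
          c a.1 b.1 + c a.1 v * c v b.1 / ∑ w ∈ univ.erase v, c v w)
        ⟨x, hxv⟩ ⟨y, hyv⟩ := by
  refine csInf_eq_csInf_of_forall_exists_le ?_ ?_
  · rintro _ ⟨h, hx, hy, rfl⟩
    refine ⟨_, ⟨fun b => h b, hx, hy, rfl⟩, ?_⟩
    rw [elEnergy_eq_starReduction_add_sq c v hsymm hv.ne']
    exact le_add_of_nonneg_right (div_nonneg (sq_nonneg _) hv.le)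
  · rintro _ ⟨h, hx, hy, rfl⟩
    obtain ⟨H, rfl, hH⟩ := exists_elEnergy_eq_starReduction c v hsymm hv.ne' h
    exact ⟨_, ⟨H, hx, hy, rfl⟩, hH.le⟩

theorem ceff_invariant_star_reduction {V : Type*} [Fintype V] [DecidableEq V]
    (hcard : 3 ≤ Fintype.card V)
    (c : V → V → ℝ) (hnn : ∀ z w, 0 ≤ c z w) (hsymm : ∀ z w, c z w = c w z)
    (hdiag : ∀ z, c z z = 0)
    (hconn : (SimpleGraph.fromRel fun z w => 0 < c z w).Connected)
    (x y v : V) (hxy : x ≠ y) (hxv : x ≠ v) (hyv : y ≠ v)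
    (hv : 0 < ∑ w ∈ univ.erase v, c v w) :
    ceff c x y =
      ceff (fun a b : {w : V // w ≠ v} =>
          c a.1 b.1 + c a.1 v * c v b.1 / ∑ w ∈ univ.erase v, c v w)
        ⟨x, hxv⟩ ⟨y, hyv⟩ :=
  ceff_invariant_star_reduction_general c hsymm x y v hxv hyv hv
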